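/- arXiv:0902.3426 — 4 statements merged into one kernel-verified Lean document; each statement's English description precedes it below -/
import Mathlib

section
/- Let W be a finite-dimensional vector space over ℚ and let g be a ℚ-linear automorphism of W of finite order. Then det(g) = (−1)^{dim_ℚ W − dim_ℚ W^g}, where W^g = {w ∈ W : g(w) = w} is the subspace of g-fixed vectors. -/
/-!
On the fixed subspace `V = ker (g - 1)` the map `g` is the identity, so `det g` is the determinant
of the map `ḡ` induced on `W ⧸ V`, a space of dimension `dim W - dim V`. Because `g` has finite
order `n` and `ℚ` has characteristic zero, `ḡ` fixes no nonzero vector: if `g x = x + v` with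
`g v = v`, then `x = gⁿ x = x + n • v`.

A matrix `A` of finite order `n` over an ordered ring preserves the positive definite form
`G = ∑_{i<n} (Aⁱ)ᵀ Aⁱ`, i.e. `Aᵀ G A = G`. Then `(1 - Aᵀ) G A = G (A - 1)`, and when `A` fixes
no nonzero vector, taking determinants gives `det A = (-1) ^ dim`.
-/

open Finset

namespace Matrix

variable {n R : Type*} [Fintype n] [DecidableEq n]

def powGram [CommRing R] (A : Matrix n n R) (m : ℕ) : Matrix n n R :=
  ∑ i ∈ range m, (A ^ i)ᵀ * A ^ i

theorem transpose_mul_powGram_mul [CommRing R] {A : Matrix n n R} {m : ℕ} (hA : A ^ m = 1) :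
    Aᵀ * powGram A m * A = powGram A m := by
  set q : ℕ → Matrix n n R := fun i ↦ (A ^ i)ᵀ * A ^ i
  have hshift : Aᵀ * powGram A m * A = ∑ i ∈ range m, q (i + 1) := by
    simp only [powGram, mul_sum, sum_mul, q, pow_succ, transpose_mul, Matrix.mul_assoc]
  have hq : q m = q 0 := by simp only [q, hA, pow_zero]
  rw [hshift]
  apply add_right_cancel (b := q 0)
  rw [← sum_range_succ', sum_range_succ, hq]
  rfl

theorem det_powGram_ne_zero [CommRing R] [LinearOrder R] [IsStrictOrderedRing R]
    (A : Matrix n n R) {m : ℕ} (hm : 0 < m) : (powGram A m).det ≠ 0 := by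
  intro hdet
  obtain ⟨v, hv, hGv⟩ := exists_mulVec_eq_zero_iff.2 hdet
  have hsum : ∑ i ∈ range m, (A ^ i *ᵥ v) ⬝ᵥ (A ^ i *ᵥ v) = 0 := by
    simpa only [powGram, sum_mulVec, dotProduct_sum, ← mulVec_mulVec, dotProduct_mulVec,
      vecMul_transpose, dotProduct_zero] using congrArg (v ⬝ᵥ ·) hGv
  have hterm := (sum_eq_zero_iff_of_nonneg fun i _ ↦
    Fintype.sum_nonneg fun j ↦ mul_self_nonneg ((A ^ i *ᵥ v) j)).1 hsum 0 (mem_range.2 hm)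
  simp only [pow_zero, one_mulVec] at hterm
  exact hv (dotProduct_self_eq_zero.1 hterm)

theorem det_eq_neg_one_pow_card_of_transpose_mul_mul_eq [CommRing R] [IsDomain R]
    {A G : Matrix n n R} (hG : Aᵀ * G * A = G) (hGdet : G.det ≠ 0) (hA : (A - 1).det ≠ 0) :
    A.det = (-1) ^ Fintype.card n := by
  have hGA : (1 - A)ᵀ * G * A = G * (A - 1) := by
    rw [transpose_sub, transpose_one, Matrix.sub_mul, Matrix.sub_mul, hG, Matrix.one_mul,
      Matrix.mul_sub, Matrix.mul_one]
  have hdet := congrArg det hGA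
  rw [det_mul, det_mul, det_mul, det_transpose, ← neg_sub, det_neg] at hdet
  have hAdet : (-1) ^ Fintype.card n * A.det = 1 := by
    apply mul_left_cancel₀ (mul_ne_zero hA hGdet)
    linear_combination hdet
  have hsq : (-1 : R) ^ Fintype.card n * (-1) ^ Fintype.card n = 1 :=
    pow_mul_pow_eq_one _ (by norm_num)
  linear_combination (-1) ^ Fintype.card n * hAdet - A.det * hsq

theorem det_eq_neg_one_pow_card_of_isOfFinOrder [CommRing R] [LinearOrder R]
    [IsStrictOrderedRing R] {A : Matrix n n R} (hA : IsOfFinOrder A) (h1 : (A - 1).det ≠ 0) :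
    A.det = (-1) ^ Fintype.card n := by
  obtain ⟨m, hm, hAm⟩ := isOfFinOrder_iff_pow_eq_one.1 hA
  exact det_eq_neg_one_pow_card_of_transpose_mul_mul_eq (transpose_mul_powGram_mul hAm)
    (det_powGram_ne_zero A hm) h1

end Matrix

open Module LinearMap

theorem LinearMap.det_eq_neg_one_pow_finrank_of_isOfFinOrder {K M : Type*} [Field K]
    [LinearOrder K] [IsStrictOrderedRing K] [AddCommGroup M] [Module K M] [FiniteDimensional K M]
    {f : Module.End K M} (hf : IsOfFinOrder f) (hfix : ker (f - 1) = ⊥) :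
    f.det = (-1) ^ finrank K M := by
  let b := finBasis K M
  have h1 : (toMatrix b b f - 1).det ≠ 0 := by
    rwa [← toMatrix_one b, ← map_sub, det_toMatrix, ne_eq, det_eq_zero_iff_ker_ne_bot, not_not]
  have hA : IsOfFinOrder (toMatrix b b f) := (toMatrixAlgEquiv b).toMonoidHom.isOfFinOrder hf
  rw [← det_toMatrix b, Matrix.det_eq_neg_one_pow_card_of_isOfFinOrder hA h1, Fintype.card_fin]

namespace Module.End

variable {R M : Type*} [Ring R] [AddCommGroup M] [Module R M] {f : Module.End R M}

theorem ker_sub_one_le_comap (f : Module.End R M) : ker (f - 1) ≤ (ker (f - 1)).comap f := by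
  intro x hx
  simp_all [sub_eq_zero]

theorem pow_apply_eq_add_nsmul {x : M} (hx : f (f x - x) = f x - x) (k : ℕ) :
    (f ^ k) x = x + k • (f x - x) := by
  induction k with
  | zero => simp
  | succ k ih =>
    rw [pow_succ', mul_apply, ih, map_add, map_nsmul, hx, succ_nsmul]
    abel

theorem mem_ker_sub_one_of_sub_mem [IsAddTorsionFree M] (hf : IsOfFinOrder f) {x : M}
    (hx : f x - x ∈ ker (f - 1)) : x ∈ ker (f - 1) := by
  obtain ⟨m, hm, hfm⟩ := isOfFinOrder_iff_pow_eq_one.1 hf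
  have hfix : f (f x - x) = f x - x := sub_eq_zero.1 hx
  have hmv : m • (f x - x) = 0 := by
    simpa [hfm] using pow_apply_eq_add_nsmul hfix m
  simpa [sub_eq_zero] using (smul_eq_zero.1 hmv).resolve_left hm.ne'

theorem isOfFinOrder_mapQ {p : Submodule R M} (hf : IsOfFinOrder f) (h : p ≤ p.comap f) :
    IsOfFinOrder (p.mapQ p f h) := by
  obtain ⟨m, hm, hfm⟩ := isOfFinOrder_iff_pow_eq_one.1 hf
  refine isOfFinOrder_iff_pow_eq_one.2 ⟨m, hm, ?_⟩
  rw [← Submodule.mapQ_pow]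
  ext
  simp [hfm]

theorem ker_mapQ_ker_sub_one_sub_one_eq_bot [IsAddTorsionFree M] (hf : IsOfFinOrder f) :
    ker ((ker (f - 1)).mapQ _ f f.ker_sub_one_le_comap - 1) = ⊥ := by
  refine eq_bot_iff.2 fun q hq ↦ ?_
  induction q using Submodule.Quotient.induction_on with
  | H x =>
    rw [Submodule.mem_bot, Submodule.Quotient.mk_eq_zero]
    refine mem_ker_sub_one_of_sub_mem hf ?_
    rwa [mem_ker, LinearMap.sub_apply, Submodule.mapQ_apply, one_apply,
      ← Submodule.Quotient.mk_sub, Submodule.Quotient.mk_eq_zero] at hq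

end Module.End

/-- If `W` is a finite-dimensional vector space over `ℚ` and `g` is a `ℚ`-linear
automorphism of `W` of finite order, then
`det g = (-1) ^ (dim W - dim W^g)`, where `W^g` is the subspace of `g`-fixed vectors
(realized as the kernel of `g - id`). -/
theorem det_eq_neg_one_pow_of_finOrder
    (W : Type*) [AddCommGroup W] [Module ℚ W] [FiniteDimensional ℚ W]
    (g : W ≃ₗ[ℚ] W) (hg : IsOfFinOrder g) :
    LinearMap.det (g : W →ₗ[ℚ] W) =
      (-1 : ℚ) ^ (Module.finrank ℚ W -
        Module.finrank ℚ (LinearMap.ker ((g : W →ₗ[ℚ] W) - LinearMap.id))) := by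
  set f : Module.End ℚ W := (g : W →ₗ[ℚ] W)
  have hf : IsOfFinOrder f := LinearEquiv.automorphismGroup.toLinearMapMonoidHom.isOfFinOrder hg
  have : IsAddTorsionFree W := .of_module_rat W
  have hrestrict : f.restrict (p := ker (f - 1)) (q := ker (f - 1)) f.ker_sub_one_le_comap = 1 := by
    ext x
    exact sub_eq_zero.1 x.2
  rw [← Module.End.one_eq_id, det_eq_det_mul_det _ f f.ker_sub_one_le_comap, hrestrict, map_one,
    one_mul, ← Submodule.finrank_quotient]
  exact det_eq_neg_one_pow_finrank_of_isOfFinOrder (Module.End.isOfFinOrder_mapQ hf _)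
    (Module.End.ker_mapQ_ker_sub_one_sub_one_eq_bot hf)
end

section
/- Let G be a finite cyclic group. Any two finite-dimensional representations of G over ℚ that are both irreducible and faithful are isomorphic. In other words, up to isomorphism there is at most one faithful irreducible finite-dimensional ℚ-representation of G. -/
/-- A subspace `U` is invariant under a representation `ρ` if it is stable under the
action of every group element. -/
def RepInvariant {k G V : Type*} [CommSemiring k] [Monoid G] [AddCommMonoid V]
    [Module k V] (ρ : Representation k G V) (U : Submodule k V) : Prop :=
  ∀ g : G, ∀ v ∈ U, ρ g v ∈ U

/-- A representation is irreducible if the space is nonzero and its only invariant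
subspaces are `⊥` and `⊤`. -/
def RepIrreducible {k G V : Type*} [CommSemiring k] [Monoid G] [AddCommMonoid V]
    [Module k V] (ρ : Representation k G V) : Prop :=
  Nontrivial V ∧ ∀ U : Submodule k V, RepInvariant ρ U → U = ⊥ ∨ U = ⊤

/-!
Let `g` generate `G`, of order `n`. A representation `ρ` of `G` is the `ℚ[X]`-module `V` on
which `X` acts by `ρ g`, and `ρ` is irreducible iff this module is simple. A simple module is
`ℚ[X] ⧸ (minpoly ℚ (ρ g))`, so the minimal polynomial is irreducible; it divides
`X ^ n - 1 = ∏_{d ∣ n} Φ_d`, hence equals some `Φ_d`, and faithfulness forces `d = n`.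
So both representations are `ℚ[X] ⧸ (Φ_n)`.
-/

open Polynomial Module

theorem IsSimpleModule.nonempty_linearEquiv_quotient_annihilator (R M : Type*) [CommRing R]
    [AddCommGroup M] [Module R M] [IsSimpleModule R M] :
    Nonempty (M ≃ₗ[R] R ⧸ Module.annihilator R M) := by
  obtain ⟨I, -, ⟨e⟩⟩ := isSimpleModule_iff_quot_maximal.mp ‹IsSimpleModule R M›
  rw [e.annihilator_eq, Ideal.annihilator_quotient]
  exact ⟨e⟩

namespace Module.End

variable {K M N : Type*} [Field K] [AddCommGroup M] [Module K M] [AddCommGroup N] [Module K N]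

theorem irreducible_minpoly_of_isSimpleModule (f : End K M) [IsSimpleModule K[X] (AEval' f)] :
    Irreducible (minpoly K f) := by
  have hmax : (Ideal.span {minpoly K f}).IsMaximal :=
    span_minpoly_eq_annihilator K f ▸ IsSimpleModule.annihilator_isMaximal
  have hne : minpoly K f ≠ 0 := by
    rintro h
    rw [h, Set.singleton_zero, Ideal.span_zero] at hmax
    exact Polynomial.not_isField K (Ring.isField_iff_maximal_bot.mpr hmax)
  exact (Ideal.irreducible_iff_isMaximal_span_singleton hne).mpr hmax

theorem nonempty_aeval_linearEquiv_of_minpoly_eq (f : End K M) (f' : End K N)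
    [IsSimpleModule K[X] (AEval' f)] [IsSimpleModule K[X] (AEval' f')]
    (h : minpoly K f = minpoly K f') : Nonempty (AEval' f ≃ₗ[K[X]] AEval' f') := by
  obtain ⟨e⟩ := IsSimpleModule.nonempty_linearEquiv_quotient_annihilator K[X] (AEval' f)
  obtain ⟨e'⟩ := IsSimpleModule.nonempty_linearEquiv_quotient_annihilator K[X] (AEval' f')
  rw [← span_minpoly_eq_annihilator] at e e'
  exact ⟨e.trans ((Submodule.quotEquivOfEq _ _ (by rw [h])).trans e'.symm)⟩

end Module.End

theorem minpoly_eq_cyclotomic_orderOf {A : Type*} [Ring A] [Algebra ℚ A] {a : A}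
    (ha : IsOfFinOrder a) (hirr : Irreducible (minpoly ℚ a)) :
    minpoly ℚ a = cyclotomic (orderOf a) ℚ := by
  have hint : IsIntegral ℚ a := minpoly.ne_zero_iff.mp hirr.ne_zero
  have hdvd : minpoly ℚ a ∣ ∏ d ∈ (orderOf a).divisors, cyclotomic d ℚ := by
    rw [prod_cyclotomic_eq_X_pow_sub_one ha.orderOf_pos]
    exact minpoly.dvd ℚ a (by simp [pow_orderOf_eq_one])
  obtain ⟨d, hd, hdvd⟩ := hirr.prime.exists_mem_finset_dvd hdvd
  have heq : minpoly ℚ a = cyclotomic d ℚ :=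
    eq_of_monic_of_associated (minpoly.monic hint) (cyclotomic.monic d ℚ)
      (hirr.associated_of_dvd (cyclotomic.irreducible_rat (Nat.pos_of_mem_divisors hd)) hdvd)
  have hpow : a ^ d = 1 := by
    have := minpoly.dvd_iff.mp (heq ▸ cyclotomic.dvd_X_pow_sub_one d ℚ)
    simpa [sub_eq_zero] using this
  rwa [Nat.dvd_antisymm (Nat.dvd_of_mem_divisors hd) (orderOf_dvd_of_pow_eq_one hpow)] at heq

section Generator

variable {k G V W : Type*} [CommRing k] [Monoid G] [AddCommGroup V] [Module k V]
  [AddCommGroup W] [Module k W] {g : G}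

theorem repInvariant_iff_mem_invtSubmodule (hg : ∀ x, x ∈ Submonoid.powers g)
    (ρ : Representation k G V) (U : Submodule k V) :
    RepInvariant ρ U ↔ U ∈ End.invtSubmodule (ρ g) := by
  refine ⟨fun h ↦ h g, fun h x ↦ ?_⟩
  obtain ⟨n, rfl⟩ := hg x
  rw [map_pow, End.coe_pow]
  exact (End.mem_invtSubmodule_iff_mapsTo _).mp h |>.iterate n

theorem isSimpleModule_aeval_of_repIrreducible (hg : ∀ x, x ∈ Submonoid.powers g)
    {ρ : Representation k G V} (hρ : RepIrreducible ρ) :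
    IsSimpleModule k[X] (AEval' (ρ g)) := by
  obtain ⟨hV, hU⟩ := hρ
  have : IsSimpleOrder (End.invtSubmodule (ρ g)) := by
    have : Nontrivial (End.invtSubmodule (ρ g)) :=
      ⟨⊥, ⊤, fun h ↦ bot_ne_top (congrArg Subtype.val h)⟩
    refine ⟨fun ⟨U, hU'⟩ ↦ ?_⟩
    rw [End.invtSubmodule.mk_eq_bot_iff, End.invtSubmodule.mk_eq_top_iff]
    exact hU U ((repInvariant_iff_mem_invtSubmodule hg ρ U).mpr hU')
  exact { toIsSimpleOrder := (AEval.mapSubmodule k V (ρ g)).symm.isSimpleOrder (h := this) }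

theorem exists_intertwining_linearEquiv (hg : ∀ x, x ∈ Submonoid.powers g)
    {ρ : Representation k G V} {σ : Representation k G W}
    (E : AEval' (ρ g) ≃ₗ[k[X]] AEval' (σ g)) :
    ∃ e : V ≃ₗ[k] W, ∀ (x : G) (v : V), e (ρ x v) = σ x (e v) := by
  refine ⟨(AEval'.of (ρ g)).trans ((E.restrictScalars k).trans (AEval'.of (σ g)).symm), ?_⟩
  rintro x v
  obtain ⟨n, rfl⟩ := hg x
  obtain ⟨w, hw⟩ := (AEval'.of (σ g)).surjective (E (AEval'.of (ρ g) v))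
  simp only [LinearEquiv.trans_apply, LinearEquiv.restrictScalars_apply, map_pow]
  rw [← End.smul_def, ← AEval'.X_pow_smul_of, map_smul, ← hw, AEval'.X_pow_smul_of,
    LinearEquiv.symm_apply_apply, LinearEquiv.symm_apply_apply, End.smul_def]

end Generator

theorem minpoly_eq_cyclotomic_card_of_repIrreducible_of_injective {G V : Type*} [Group G]
    [Finite G] [AddCommGroup V] [Module ℚ V] {g : G} (hg : ∀ x, x ∈ Submonoid.powers g)
    {ρ : Representation ℚ G V} (hirr : RepIrreducible ρ) (hf : Function.Injective ρ) :
    minpoly ℚ (ρ g) = cyclotomic (Nat.card G) ℚ := by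
  have := isSimpleModule_aeval_of_repIrreducible hg hirr
  rw [← orderOf_eq_card_of_forall_mem_powers hg, ← orderOf_injective ρ hf g]
  exact minpoly_eq_cyclotomic_orderOf (ρ.isOfFinOrder (isOfFinOrder_of_finite g))
    (End.irreducible_minpoly_of_isSimpleModule _)

theorem faithful_irreducible_rat_rep_of_cyclic_unique_general
    (G : Type*) [Group G] [Finite G] [IsCyclic G]
    (V W : Type*) [AddCommGroup V] [Module ℚ V]
    [AddCommGroup W] [Module ℚ W]
    (ρ : Representation ℚ G V) (σ : Representation ℚ G W)
    (hρirr : RepIrreducible ρ) (hσirr : RepIrreducible σ)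
    (hρf : Function.Injective ρ) (hσf : Function.Injective σ) :
    ∃ e : V ≃ₗ[ℚ] W, ∀ (g : G) (v : V), e (ρ g v) = σ g (e v) := by
  obtain ⟨g, hg⟩ := IsCyclic.exists_monoid_generator (α := G)
  have := isSimpleModule_aeval_of_repIrreducible hg hρirr
  have := isSimpleModule_aeval_of_repIrreducible hg hσirr
  obtain ⟨E⟩ := End.nonempty_aeval_linearEquiv_of_minpoly_eq (ρ g) (σ g) <| by
    rw [minpoly_eq_cyclotomic_card_of_repIrreducible_of_injective hg hρirr hρf,
      minpoly_eq_cyclotomic_card_of_repIrreducible_of_injective hg hσirr hσf]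
  exact exists_intertwining_linearEquiv hg E

/-- Any two finite-dimensional representations of a finite cyclic group over `ℚ` that are
both irreducible and faithful are isomorphic. -/
theorem faithful_irreducible_rat_rep_of_cyclic_unique
    (G : Type*) [Group G] [Finite G] [IsCyclic G]
    (V W : Type*) [AddCommGroup V] [Module ℚ V] [FiniteDimensional ℚ V]
    [AddCommGroup W] [Module ℚ W] [FiniteDimensional ℚ W]
    (ρ : Representation ℚ G V) (σ : Representation ℚ G W)
    (hρirr : RepIrreducible ρ) (hσirr : RepIrreducible σ)
    (hρf : Function.Injective ρ) (hσf : Function.Injective σ) :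
    ∃ e : V ≃ₗ[ℚ] W, ∀ (g : G) (v : V), e (ρ g v) = σ g (e v) :=
  faithful_irreducible_rat_rep_of_cyclic_unique_general G V W ρ σ hρirr hσirr hρf hσf
end

section
/- Let G be a Hausdorff topological group and p a prime. Suppose u, z ∈ G commute, z has finite order coprime to p, and both u and u·z are topologically unipotent. Then z = 1 (and hence u·z = u). Consequently, two topologically unipotent elements that differ by a commuting element of finite order coprime to p are equal. -/
open Filter Topology

theorem Commute.tendsto_pow_of_tendsto_pow_mul {G : Type*} [Group G] [TopologicalSpace G]
    [IsTopologicalGroup G] {u z : G} (h : Commute u z) {α : Type*} {l : Filter α} {e : α → ℕ}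
    (hu : Tendsto (fun a => u ^ e a) l (𝓝 1))
    (huz : Tendsto (fun a => (u * z) ^ e a) l (𝓝 1)) :
    Tendsto (fun a => z ^ e a) l (𝓝 1) := by
  have hz : (fun a => z ^ e a) = fun a => (u ^ e a)⁻¹ * (u * z) ^ e a := by
    funext a
    rw [h.mul_pow, inv_mul_cancel_left]
  simpa [hz] using hu.inv.mul huz

theorem pow_pow_mul_totient_orderOf_eq_self {M : Type*} [Monoid M] {z : M} {p : ℕ}
    (hcop : (orderOf z).Coprime p) (k : ℕ) : z ^ p ^ (k * (orderOf z).totient) = z := by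
  have hmod : p ^ (k * (orderOf z).totient) ≡ 1 [MOD orderOf z] := by
    rw [mul_comm, pow_mul, ← one_pow k]
    exact (Nat.ModEq.pow_totient hcop.symm).pow k
  rw [← pow_mod_orderOf, hmod, pow_mod_orderOf, pow_one]

theorem IsOfFinOrder.eq_one_of_tendsto_pow_pow {M : Type*} [Monoid M] [TopologicalSpace M]
    [T2Space M] {z : M} (hz : IsOfFinOrder z) {p : ℕ} (hcop : (orderOf z).Coprime p)
    (hlim : Tendsto (fun n : ℕ => z ^ p ^ n) atTop (𝓝 1)) : z = 1 := by
  have hφ : 0 < (orderOf z).totient := Nat.totient_pos.mpr hz.orderOf_pos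
  have hsub : Tendsto (fun k : ℕ => k * (orderOf z).totient) atTop atTop :=
    tendsto_id.atTop_mul_const' hφ
  have hconst : Tendsto (fun _ : ℕ => z) atTop (𝓝 1) :=
    (hlim.comp hsub).congr fun k => pow_pow_mul_totient_orderOf_eq_self hcop k
  exact tendsto_nhds_unique tendsto_const_nhds hconst

theorem eq_one_of_commute_topologically_unipotent_general
    (G : Type*) [Group G] [TopologicalSpace G] [IsTopologicalGroup G] [T2Space G]
    (p : ℕ) (u z : G) (huz : Commute u z)
    (hz : IsOfFinOrder z) (hcop : Nat.Coprime (orderOf z) p)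
    (hu : Tendsto (fun n : ℕ => u ^ (p ^ n)) atTop (𝓝 1))
    (huz' : Tendsto (fun n : ℕ => (u * z) ^ (p ^ n)) atTop (𝓝 1)) :
    z = 1 ∧ u * z = u := by
  have hz1 : z = 1 := hz.eq_one_of_tendsto_pow_pow hcop (huz.tendsto_pow_of_tendsto_pow_mul hu huz')
  exact ⟨hz1, by rw [hz1, mul_one]⟩

/-- Let `G` be a Hausdorff topological group and `p` a prime. If `u` and `z` commute,
`z` has finite order coprime to `p`, and both `u` and `u * z` are topologically unipotent
(i.e. their `p ^ n`-th powers tend to `1`), then `z = 1` (and hence `u * z = u`). -/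
theorem eq_one_of_commute_topologically_unipotent
    (G : Type*) [Group G] [TopologicalSpace G] [IsTopologicalGroup G] [T2Space G]
    (p : ℕ) (hp : p.Prime) (u z : G) (huz : Commute u z)
    (hz : IsOfFinOrder z) (hcop : Nat.Coprime (orderOf z) p)
    (hu : Tendsto (fun n : ℕ => u ^ (p ^ n)) atTop (𝓝 1))
    (huz' : Tendsto (fun n : ℕ => (u * z) ^ (p ^ n)) atTop (𝓝 1)) :
    z = 1 ∧ u * z = u :=
  eq_one_of_commute_topologically_unipotent_general G p u z huz hz hcop hu huz'
end

section
/- Let G be a Hausdorff topological group and p a prime. Suppose s₁·u₁ = s₂·u₂ in G, where s₁ and s₂ have finite order coprime to p, u₁ and u₂ are topologically unipotent, and the four elements s₁, s₂, u₁, u₂ pairwise commute. Then s₁ = s₂ and u₁ = u₂. -/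
/-!
Put `t := s₂⁻¹ * s₁ = u₂ * u₁⁻¹`. As a product of commuting elements of order prime to `p`,
`t` has order `m` prime to `p`, so by Euler `p ^ (φ m * j) ≡ 1 [MOD m]` and
`t ^ p ^ (φ m * j) = t` for every `j`. As a product of commuting topologically unipotent
elements, `t ^ p ^ n → 1`.
Along the subsequence `n = φ m * j` the constant `t` tends to `1`, so `t = 1` in the Hausdorff
group `G`.
-/

open Filter Topology

theorem Commute.coprime_orderOf_mul {M : Type*} [Monoid M] {a b : M} {p : ℕ} (hab : Commute a b)
    (ha : (orderOf a).Coprime p) (hb : (orderOf b).Coprime p) : (orderOf (a * b)).Coprime p :=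
  (ha.mul_left hb).coprime_dvd_left hab.orderOf_mul_dvd_mul_orderOf

theorem pow_pow_totient_mul_eq_self {M : Type*} [Monoid M] {t : M} {p : ℕ}
    (hcop : (orderOf t).Coprime p) (j : ℕ) : t ^ p ^ ((orderOf t).totient * j) = t := by
  have hmod : p ^ ((orderOf t).totient * j) ≡ 1 [MOD orderOf t] := by
    simpa only [pow_mul, one_pow] using (Nat.ModEq.pow_totient hcop.symm).pow j
  rw [← pow_mod_orderOf, hmod, pow_mod_orderOf, pow_one]

theorem eq_one_of_coprime_orderOf_of_tendsto_pow_pow {M : Type*} [Monoid M] [TopologicalSpace M]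
    [T2Space M] {t : M} {p : ℕ} (hcop : (orderOf t).Coprime p)
    (ht : Tendsto (fun n : ℕ => t ^ p ^ n) atTop (𝓝 1)) : t = 1 := by
  have hfix : ∃ᶠ n in atTop, t ^ p ^ n = t := by
    rcases (orderOf t).eq_zero_or_pos with h0 | hpos
    · -- `orderOf t = 0` (infinite order) is coprime only to `p = 1`
      rw [h0, Nat.coprime_zero_left] at hcop
      exact Frequently.of_forall fun n => by simp [hcop]
    · refine frequently_atTop.2 fun a =>
        ⟨(orderOf t).totient * a, ?_, pow_pow_totient_mul_eq_self hcop a⟩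
      exact Nat.le_mul_of_pos_left a (Nat.totient_pos.2 hpos)
  exact (tendsto_nhds_unique_of_frequently_eq ht (tendsto_const_nhds (x := t)) hfix).symm

theorem Commute.tendsto_mul_inv_pow_pow {G : Type*} [Group G] [TopologicalSpace G]
    [IsTopologicalGroup G] {a b : G} {p : ℕ} (hab : Commute a b)
    (ha : Tendsto (fun n : ℕ => a ^ p ^ n) atTop (𝓝 1))
    (hb : Tendsto (fun n : ℕ => b ^ p ^ n) atTop (𝓝 1)) :
    Tendsto (fun n : ℕ => (a * b⁻¹) ^ p ^ n) atTop (𝓝 1) := by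
  simpa only [hab.inv_right.mul_pow, inv_pow, inv_one, mul_one] using ha.mul hb.inv

theorem topological_jordan_decomposition_unique_general
    (G : Type*) [Group G] [TopologicalSpace G] [IsTopologicalGroup G] [T2Space G]
    (p : ℕ) (s₁ s₂ u₁ u₂ : G)
    (heq : s₁ * u₁ = s₂ * u₂)
    (hcop₁ : Nat.Coprime (orderOf s₁) p) (hcop₂ : Nat.Coprime (orderOf s₂) p)
    (hu₁ : Tendsto (fun n : ℕ => u₁ ^ (p ^ n)) atTop (𝓝 1))
    (hu₂ : Tendsto (fun n : ℕ => u₂ ^ (p ^ n)) atTop (𝓝 1))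
    (h₁₂ : Commute s₁ s₂) (hu₁u₂ : Commute u₁ u₂) :
    s₁ = s₂ ∧ u₁ = u₂ := by
  have ht : s₂⁻¹ * s₁ = u₂ * u₁⁻¹ := by
    rw [inv_mul_eq_iff_eq_mul, ← mul_assoc, eq_mul_inv_iff_mul_eq, heq]
  have hcop : (orderOf (s₂⁻¹ * s₁)).Coprime p :=
    h₁₂.symm.inv_left.coprime_orderOf_mul (by rwa [orderOf_inv]) hcop₁
  have htend : Tendsto (fun n : ℕ => (s₂⁻¹ * s₁) ^ p ^ n) atTop (𝓝 1) := by
    simpa only [ht] using hu₁u₂.symm.tendsto_mul_inv_pow_pow hu₂ hu₁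
  have hs : s₁ = s₂ :=
    (inv_mul_eq_one.mp (eq_one_of_coprime_orderOf_of_tendsto_pow_pow hcop htend)).symm
  exact ⟨hs, mul_left_cancel (heq.trans (congrArg (· * u₂) hs.symm))⟩

/-- Uniqueness of the topological Jordan decomposition: in a Hausdorff topological group,
if `s₁ * u₁ = s₂ * u₂` where `s₁, s₂` have finite order coprime to the prime `p`,
`u₁, u₂` are topologically unipotent (their `p ^ n`-th powers tend to `1`), and the four
elements pairwise commute, then `s₁ = s₂` and `u₁ = u₂`. -/
theorem topological_jordan_decomposition_unique
    (G : Type*) [Group G] [TopologicalSpace G] [IsTopologicalGroup G] [T2Space G]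
    (p : ℕ) (hp : p.Prime) (s₁ s₂ u₁ u₂ : G)
    (heq : s₁ * u₁ = s₂ * u₂)
    (hs₁ : IsOfFinOrder s₁) (hs₂ : IsOfFinOrder s₂)
    (hcop₁ : Nat.Coprime (orderOf s₁) p) (hcop₂ : Nat.Coprime (orderOf s₂) p)
    (hu₁ : Tendsto (fun n : ℕ => u₁ ^ (p ^ n)) atTop (𝓝 1))
    (hu₂ : Tendsto (fun n : ℕ => u₂ ^ (p ^ n)) atTop (𝓝 1))
    (h₁₂ : Commute s₁ s₂) (h₁u₁ : Commute s₁ u₁) (h₁u₂ : Commute s₁ u₂)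
    (h₂u₁ : Commute s₂ u₁) (h₂u₂ : Commute s₂ u₂) (hu₁u₂ : Commute u₁ u₂) :
    s₁ = s₂ ∧ u₁ = u₂ :=
  topological_jordan_decomposition_unique_general G p s₁ s₂ u₁ u₂ heq hcop₁ hcop₂ hu₁ hu₂ h₁₂ hu₁u₂
end
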